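/- arXiv:1802.06885 — 7 statements merged into one kernel-verified Lean document; each statement's English description precedes it below -/
import Mathlib

section
/- Let f : ℝⁿ → ℝ be of class C² in a neighborhood of x̄ with all coordinates positive, suppose p̄ᵢ + λ̄·∂f/∂xᵢ(x̄) = 0 for all i with p̄ having all positive coordinates, f(x̄) = ȳ, and the determinant F of the bordered Hessian of f at x̄ is nonzero. Let φ : V → W be a C¹ map on a neighborhood V of (p̄, ȳ) such that for (p,y) ∈ V, φ(p,y) = (λ(p,y), x(p,y)) is the unique point in W satisfying pᵢ + λ·fᵢ(x) = 0 for all i and f(x) = y. Then for all i, j = 1,…,n, the partial derivative of the i-th coordinate function xᵢ(p,y) with respect to p_j at (p̄, ȳ) equals −F_{ij}/(λ̄·F), where F is the determinant of the bordered Hessian of f at x̄ and F_{ij} is the cofactor of the entry f_{ij} in the bordered Hessian. -/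
/-- Partial derivative of `f : ℝⁿ → ℝ` with respect to the `i`-th variable. -/
noncomputable def pderiv1 (n : ℕ) (f : (Fin n → ℝ) → ℝ) (i : Fin n) (x : Fin n → ℝ) : ℝ :=
  fderiv ℝ f x (Pi.single i 1)

/-- Second partial derivative `f_{ij}` of `f : ℝⁿ → ℝ`. -/
noncomputable def pderiv2 (n : ℕ) (f : (Fin n → ℝ) → ℝ) (i j : Fin n) (x : Fin n → ℝ) : ℝ :=
  pderiv1 n (pderiv1 n f j) i x

/-- The bordered Hessian of `f` at `x`: the `(n+1) × (n+1)` matrix with `(0,0)` entry `0`,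
the rest of row 0 and column 0 given by the gradient of `f`, and lower-right `n × n`
block the Hessian of `f`. -/
noncomputable def borderedHessian (n : ℕ) (f : (Fin n → ℝ) → ℝ) (x : Fin n → ℝ) :
    Matrix (Fin (n + 1)) (Fin (n + 1)) ℝ :=
  Matrix.of fun i j =>
    Fin.cases
      (Fin.cases (0 : ℝ) (fun j' => pderiv1 n f j' x) j)
      (fun i' => Fin.cases (pderiv1 n f i' x) (fun j' => pderiv2 n f i' j' x) j) i

/-- The cofactor of the `(i,j)` entry of an `(m+1) × (m+1)` real matrix. -/
noncomputable def cofactor {m : ℕ} (M : Matrix (Fin (m + 1)) (Fin (m + 1)) ℝ)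
    (i j : Fin (m + 1)) : ℝ :=
  (-1 : ℝ) ^ ((i : ℕ) + (j : ℕ)) * (M.submatrix i.succAbove j.succAbove).det

/-- The Allen elasticity of substitution of factors `i` and `j` at `x`. -/
noncomputable def AES (n : ℕ) (f : (Fin n → ℝ) → ℝ) (x : Fin n → ℝ) (i j : Fin n) : ℝ :=
  ((∑ k, x k * pderiv1 n f k x) / (x i * x j)) *
    (cofactor (borderedHessian n f x) i.succ j.succ / (borderedHessian n f x).det)

open Filter

/-!
Differentiating the identities `pₖ + λ(p,y) fₖ(x(p,y)) = 0` and `f(x(p,y)) = y` in the direction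
of `p_j` shows that `(∂_{p_j}λ / λ̄, ∂_{p_j}x)` solves the linear system whose matrix is the
(transposed) bordered Hessian and whose right-hand side is `-e_j / λ̄`; Cramer's rule then reads
off `∂_{p_j}xᵢ` as a cofactor over the determinant. Because the system is set up with the
transpose, whose adjugate is the transposed adjugate, the symmetry of the Hessian is never needed.
-/

open Matrix Topology

theorem fderiv_apply_eq_sum_mul_pderiv1 {n : ℕ} (f : (Fin n → ℝ) → ℝ) (x w : Fin n → ℝ) :
    fderiv ℝ f x w = ∑ k, w k * pderiv1 n f k x := by
  conv_lhs => rw [pi_eq_sum_univ' w, map_sum]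
  simp [pderiv1]

theorem adjugate_apply_eq_cofactor {m : ℕ} (M : Matrix (Fin (m + 1)) (Fin (m + 1)) ℝ)
    (i j : Fin (m + 1)) : M.adjugate i j = cofactor M j i := by
  rw [adjugate_fin_succ_eq_det_submatrix, cofactor]

theorem det_mul_eq_cofactor_mul_of_transpose_mulVec_eq_single {m : ℕ}
    (M : Matrix (Fin (m + 1)) (Fin (m + 1)) ℝ) {u : Fin (m + 1) → ℝ} {j : Fin (m + 1)} {c : ℝ}
    (hu : Mᵀ *ᵥ u = Pi.single j c) (i : Fin (m + 1)) :
    M.det * u i = cofactor M i j * c := by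
  have hcramer : Mᵀ.det • u = Mᵀ.adjugate *ᵥ Pi.single j c := by
    rw [← hu, mulVec_mulVec, adjugate_mul, smul_mulVec, one_mulVec]
  simpa [← adjugate_transpose, adjugate_apply_eq_cofactor] using congrFun hcramer i

theorem borderedHessian_transpose_mulVec_cons {n : ℕ} (f : (Fin n → ℝ) → ℝ)
    (x : Fin n → ℝ) (t : ℝ) (u : Fin n → ℝ) :
    (borderedHessian n f x)ᵀ *ᵥ Fin.cons t u =
      Fin.cons (∑ k, u k * pderiv1 n f k x)
        (fun a => t * pderiv1 n f a x + ∑ k, u k * pderiv2 n f k a x) := by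
  ext a
  cases a using Fin.cases <;>
    simp [borderedHessian, mulVec, dotProduct, Fin.sum_univ_succ, mul_comm]

theorem HasFDerivAt.eq_zero_of_eventuallyEq_const {E : Type*} [NormedAddCommGroup E]
    [NormedSpace ℝ E] {g : E → ℝ} {g' : E →L[ℝ] ℝ} {z₀ : E} (hg : HasFDerivAt g g' z₀) {c : ℝ}
    (hc : ∀ᶠ z in 𝓝 z₀, g z = c) : g' = 0 :=
  (hg.congr_of_eventuallyEq (hc.mono fun _ h => h.symm)).unique (hasFDerivAt_const c z₀)

section Linearization

variable {n : ℕ} {f : (Fin n → ℝ) → ℝ} {φ : (Fin n → ℝ) × ℝ → ℝ × (Fin n → ℝ)}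
  {φ' : (Fin n → ℝ) × ℝ →L[ℝ] ℝ × (Fin n → ℝ)} {z₀ : (Fin n → ℝ) × ℝ} {l : ℝ} {x : Fin n → ℝ}

theorem price_condition_linearized (hφ : HasFDerivAt φ φ' z₀) (hl : (φ z₀).1 = l)
    (hx : (φ z₀).2 = x) (a : Fin n) (hfa : DifferentiableAt ℝ (pderiv1 n f a) x)
    (hcond : ∀ᶠ z in 𝓝 z₀, z.1 a + (φ z).1 * pderiv1 n f a (φ z).2 = 0)
    (v : (Fin n → ℝ) × ℝ) :
    v.1 a + (φ' v).1 * pderiv1 n f a x + l * ∑ k, (φ' v).2 k * pderiv2 n f k a x = 0 := by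
  have hprice : HasFDerivAt (fun z : (Fin n → ℝ) × ℝ => z.1 a)
      ((ContinuousLinearMap.proj a).comp (ContinuousLinearMap.fst ℝ _ ℝ)) z₀ :=
    hasFDerivAt_pi'.1 hasFDerivAt_fst a
  have hmarg : HasFDerivAt (fun z => pderiv1 n f a (φ z).2)
      ((fderiv ℝ (pderiv1 n f a) x).comp ((ContinuousLinearMap.snd ℝ ℝ _).comp φ')) z₀ := by
    rw [← hx] at hfa ⊢
    exact hfa.hasFDerivAt.comp z₀ hφ.snd
  have hD := (hprice.fun_add (hφ.fst.fun_mul hmarg)).eq_zero_of_eventuallyEq_const hcond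
  have hDv := congrArg (fun L => L v) hD
  simp only [_root_.add_apply, _root_.smul_apply, ContinuousLinearMap.comp_apply,
    _root_.zero_apply, ContinuousLinearMap.proj_apply, ContinuousLinearMap.coe_fst',
    ContinuousLinearMap.coe_snd', hl, hx, fderiv_apply_eq_sum_mul_pderiv1, smul_eq_mul] at hDv
  simp only [pderiv2]
  linarith

theorem output_condition_linearized (hφ : HasFDerivAt φ φ' z₀) (hx : (φ z₀).2 = x)
    (hf : DifferentiableAt ℝ f x) (hcond : ∀ᶠ z in 𝓝 z₀, f (φ z).2 = z.2)
    (v : (Fin n → ℝ) × ℝ) :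
    ∑ k, (φ' v).2 k * pderiv1 n f k x = v.2 := by
  have hfx : HasFDerivAt (fun z => f (φ z).2)
      ((fderiv ℝ f x).comp ((ContinuousLinearMap.snd ℝ ℝ _).comp φ')) z₀ := by
    rw [← hx] at hf ⊢
    exact hf.hasFDerivAt.comp z₀ hφ.snd
  have hD := (hfx.fun_sub hasFDerivAt_snd).eq_zero_of_eventuallyEq_const
    (hcond.mono fun _ h => sub_eq_zero.2 h)
  have hDv := congrArg (fun L => L v) hD
  simp only [_root_.sub_apply, ContinuousLinearMap.comp_apply, _root_.zero_apply,
    ContinuousLinearMap.coe_snd', fderiv_apply_eq_sum_mul_pderiv1] at hDv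
  linarith

end Linearization

theorem borderedHessian_transpose_mulVec_eq_single {n : ℕ} {f : (Fin n → ℝ) → ℝ}
    {x : Fin n → ℝ} {l dl : ℝ} {u : Fin n → ℝ} (hl : l ≠ 0) (j : Fin n)
    (hprice : ∀ a, (Pi.single j 1 : Fin n → ℝ) a + dl * pderiv1 n f a x +
      l * ∑ k, u k * pderiv2 n f k a x = 0)
    (houtput : ∑ k, u k * pderiv1 n f k x = 0) :
    (borderedHessian n f x)ᵀ *ᵥ Fin.cons (dl / l) u = Pi.single j.succ (-l⁻¹) := by
  rw [borderedHessian_transpose_mulVec_cons]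
  ext a
  cases a using Fin.cases with
  | zero => simpa using houtput
  | succ a =>
    have hpa := hprice a
    rw [Fin.cons_succ, show (Pi.single j.succ (-l⁻¹) : Fin (n + 1) → ℝ) a.succ =
      -l⁻¹ * (Pi.single j 1 : Fin n → ℝ) a by simp [Pi.single_apply]]
    field_simp
    linarith

theorem ContDiffAt.differentiableAt_pderiv1 {n : ℕ} {f : (Fin n → ℝ) → ℝ} {x : Fin n → ℝ}
    (hf : ContDiffAt ℝ 2 f x) (a : Fin n) : DifferentiableAt ℝ (pderiv1 n f a) x :=
  ((hf.fderiv_right (m := 1) le_rfl).differentiableAt one_ne_zero).clm_apply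
    (differentiableAt_const _)

theorem input_demand_price_derivative_general (n : ℕ) (f : (Fin n → ℝ) → ℝ)
    (xbar pbar : Fin n → ℝ) (lbar ybar : ℝ)
    (hppos : ∀ i, 0 < pbar i)
    (hC2 : ∀ᶠ z in nhds xbar, ContDiffAt ℝ 2 f z)
    (hcrit : ∀ i, pbar i + lbar * pderiv1 n f i xbar = 0)
    (hout : f xbar = ybar)
    (hF : (borderedHessian n f xbar).det ≠ 0)
    (V : Set ((Fin n → ℝ) × ℝ)) (W : Set (ℝ × (Fin n → ℝ)))
    (φ : (Fin n → ℝ) × ℝ → ℝ × (Fin n → ℝ))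
    (hV : IsOpen V)
    (hVmem : (pbar, ybar) ∈ V) (hWmem : (lbar, xbar) ∈ W)
    (hφ : ContDiffOn ℝ 1 φ V) (hmaps : Set.MapsTo φ V W)
    (huniq : ∀ p y, (p, y) ∈ V → ∀ l x, (l, x) ∈ W →
      (((∀ i, p i + l * pderiv1 n f i x = 0) ∧ f x = y) ↔ (l, x) = φ (p, y)))
    :
    ∀ i j : Fin n,
      fderiv ℝ (fun z => (φ z).2 i) (pbar, ybar) (Pi.single j 1, 0) =
        -(cofactor (borderedHessian n f xbar) i.succ j.succ /
          (lbar * (borderedHessian n f xbar).det)) := by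
  intro i j
  have hφ₀ : φ (pbar, ybar) = (lbar, xbar) :=
    ((huniq pbar ybar hVmem lbar xbar hWmem).1 ⟨hcrit, hout⟩).symm
  have hl : (φ (pbar, ybar)).1 = lbar := by rw [hφ₀]
  have hx : (φ (pbar, ybar)).2 = xbar := by rw [hφ₀]
  have hlbar : lbar ≠ 0 := by
    rintro rfl
    exact (hppos i).ne' (by simpa using hcrit i)
  have hφ' : HasFDerivAt φ (fderiv ℝ φ (pbar, ybar)) (pbar, ybar) :=
    ((hφ.contDiffAt (hV.mem_nhds hVmem)).differentiableAt one_ne_zero).hasFDerivAt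
  have hcond : ∀ᶠ z in 𝓝 (pbar, ybar),
      (∀ k, z.1 k + (φ z).1 * pderiv1 n f k (φ z).2 = 0) ∧ f (φ z).2 = z.2 :=
    eventually_of_mem (hV.mem_nhds hVmem) fun z hz => (huniq z.1 z.2 hz _ _ (hmaps hz)).2 rfl
  have hf := hC2.self_of_nhds
  have hsystem := borderedHessian_transpose_mulVec_eq_single hlbar j
    (fun a => price_condition_linearized hφ' hl hx a (hf.differentiableAt_pderiv1 a)
      (hcond.mono fun _ h => h.1 a) (Pi.single j 1, 0))
    (output_condition_linearized hφ' hx (hf.differentiableAt (by norm_num))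
      (hcond.mono fun _ h => h.2) (Pi.single j 1, 0))
  have hcramer := det_mul_eq_cofactor_mul_of_transpose_mulVec_eq_single _ hsystem i.succ
  rw [Fin.cons_succ] at hcramer
  rw [(hasFDerivAt_pi'.1 hφ'.snd i).fderiv, ContinuousLinearMap.comp_apply,
    ContinuousLinearMap.comp_apply, ContinuousLinearMap.proj_apply, ContinuousLinearMap.coe_snd']
  field_simp at hcramer ⊢
  linarith

/-- **Corollary: derivative of input demand with respect to prices.**
`∂xᵢ/∂p_j (p̄, ȳ) = −F_{ij}/(λ̄ F)`, where `F` is the determinant of the bordered Hessian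
of `f` at `x̄` and `F_{ij}` the cofactor of the Hessian entry `f_{ij}` in it. -/
theorem input_demand_price_derivative (n : ℕ) (f : (Fin n → ℝ) → ℝ)
    (xbar pbar : Fin n → ℝ) (lbar ybar : ℝ)
    (hxpos : ∀ i, 0 < xbar i) (hppos : ∀ i, 0 < pbar i)
    (hC2 : ∀ᶠ z in nhds xbar, ContDiffAt ℝ 2 f z)
    (hcrit : ∀ i, pbar i + lbar * pderiv1 n f i xbar = 0)
    (hout : f xbar = ybar)
    (hF : (borderedHessian n f xbar).det ≠ 0)
    (V : Set ((Fin n → ℝ) × ℝ)) (W : Set (ℝ × (Fin n → ℝ)))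
    (φ : (Fin n → ℝ) × ℝ → ℝ × (Fin n → ℝ))
    (hV : IsOpen V) (hW : IsOpen W)
    (hVmem : (pbar, ybar) ∈ V) (hWmem : (lbar, xbar) ∈ W)
    (hφ : ContDiffOn ℝ 1 φ V) (hmaps : Set.MapsTo φ V W)
    (huniq : ∀ p y, (p, y) ∈ V → ∀ l x, (l, x) ∈ W →
      (((∀ i, p i + l * pderiv1 n f i x = 0) ∧ f x = y) ↔ (l, x) = φ (p, y)))
    :
    ∀ i j : Fin n,
      fderiv ℝ (fun z => (φ z).2 i) (pbar, ybar) (Pi.single j 1, 0) =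
        -(cofactor (borderedHessian n f xbar) i.succ j.succ /
          (lbar * (borderedHessian n f xbar).det)) :=
  input_demand_price_derivative_general n f xbar pbar lbar ybar hppos hC2 hcrit hout hF V W φ hV
    hVmem hWmem hφ hmaps huniq
end

section
/- Let f : ℝⁿ → ℝ be of class C² in a neighborhood of x̄ with all coordinates positive, suppose p̄ᵢ + λ̄·∂f/∂xᵢ(x̄) = 0 for all i with p̄ having all positive coordinates, f(x̄) = ȳ, and the determinant of the bordered Hessian of f at x̄ is nonzero. Let φ = (λ(·,·), x(·,·)) : V → W be a C¹ map on a neighborhood V of (p̄, ȳ) such that for (p,y) ∈ V, φ(p,y) is the unique point (λ, x) in W satisfying pᵢ + λ·fᵢ(x) = 0 for all i and f(x) = y, and define the cost function C(p, y) = Σᵢ pᵢ·xᵢ(p, y) on V. Then at (p̄, ȳ): ∂C/∂pᵢ(p̄, ȳ) = x̄ᵢ for every i = 1,…,n, and ∂C/∂y(p̄, ȳ) = −λ̄. -/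
open Filter

/-! Envelope theorem. Differentiating the constraint `f (x(p,y)) = y` gives
`∇f(x̄) · Dx = dy`, and the Lagrange condition `p̄ = -λ̄ ∇f(x̄)` turns the term `p̄ · Dx` of
`DC = p̄ · Dx + dp · x̄` into `-λ̄ dy`: the response of the inputs drops out. -/

open Topology

section

variable {E F G : Type*} [NormedAddCommGroup E] [NormedSpace ℝ E] [NormedAddCommGroup F]
  [NormedSpace ℝ F] [NormedAddCommGroup G] [NormedSpace ℝ G]

theorem HasFDerivAt.comp_eq_of_eventuallyEq {x : E → F} {f : F → G} {g : E → G}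
    {Dx : E →L[ℝ] F} {Df : F →L[ℝ] G} {Dg : E →L[ℝ] G} {z : E}
    (hx : HasFDerivAt x Dx z) (hf : HasFDerivAt f Df (x z)) (hg : HasFDerivAt g Dg z)
    (hfx : f ∘ x =ᶠ[𝓝 z] g) : Df.comp Dx = Dg :=
  ((hf.comp z hx).congr_of_eventuallyEq hfx.symm).unique hg

end

section

variable {ι Y : Type*} [Fintype ι] [NormedAddCommGroup Y] [NormedSpace ℝ Y]

def cost (x : (ι → ℝ) × Y → ι → ℝ) (z : (ι → ℝ) × Y) : ℝ :=
  ∑ i, z.1 i * x z i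

theorem fderiv_cost_apply {x : (ι → ℝ) × Y → ι → ℝ} {Dx : (ι → ℝ) × Y →L[ℝ] ι → ℝ}
    {z : (ι → ℝ) × Y} (hx : HasFDerivAt x Dx z) (v : (ι → ℝ) × Y) :
    fderiv ℝ (cost x) z v = ∑ i, (z.1 i * Dx v i + v.1 i * x z i) := by
  have hterm : ∀ i, HasFDerivAt (fun w : (ι → ℝ) × Y => w.1 i * x w i)
      (z.1 i • (ContinuousLinearMap.proj i).comp Dx
        + x z i • (ContinuousLinearMap.proj i).comp (ContinuousLinearMap.fst ℝ _ Y)) z :=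
    fun i => (((ContinuousLinearMap.proj i).comp (ContinuousLinearMap.fst ℝ _ Y)).hasFDerivAt).mul
      ((hasFDerivAt_apply i _).comp z hx)
  unfold cost
  rw [(HasFDerivAt.fun_sum fun i _ => hterm i).fderiv]
  simp [mul_comm]

variable [DecidableEq ι]

theorem ContinuousLinearMap.sum_mul_apply_single (L : (ι → ℝ) →L[ℝ] ℝ) (u : ι → ℝ) :
    ∑ i, u i * L (Pi.single i 1) = L u := by
  conv_rhs => rw [← Finset.univ_sum_single u]
  simp_rw [map_sum, ← smul_eq_mul, ← map_smul, ← Pi.single_smul', smul_eq_mul, mul_one]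

theorem sum_mul_eq_neg_mul_of_lagrange {L : (ι → ℝ) →L[ℝ] ℝ} {p : ι → ℝ} {l : ℝ}
    (hp : ∀ i, p i + l * L (Pi.single i 1) = 0) (u : ι → ℝ) :
    ∑ i, p i * u i = -l * L u := by
  rw [← L.sum_mul_apply_single, Finset.mul_sum]
  refine Finset.sum_congr rfl fun i _ => ?_
  rw [eq_neg_of_add_eq_zero_left (hp i)]
  ring

theorem fderiv_cost_apply_of_lagrange {x : (ι → ℝ) × ℝ → ι → ℝ}
    {Dx : (ι → ℝ) × ℝ →L[ℝ] ι → ℝ} {z : (ι → ℝ) × ℝ} {Df : (ι → ℝ) →L[ℝ] ℝ} {l : ℝ}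
    (hx : HasFDerivAt x Dx z) (hlag : ∀ i, z.1 i + l * Df (Pi.single i 1) = 0)
    (hconstr : Df.comp Dx = ContinuousLinearMap.snd ℝ (ι → ℝ) ℝ)
    (v : (ι → ℝ) × ℝ) :
    fderiv ℝ (cost x) z v = -l * v.2 + ∑ i, v.1 i * x z i := by
  rw [fderiv_cost_apply hx, Finset.sum_add_distrib, sum_mul_eq_neg_mul_of_lagrange hlag,
    ← ContinuousLinearMap.comp_apply, hconstr, ContinuousLinearMap.coe_snd']

end

theorem cost_function_first_derivatives_general (n : ℕ) (f : (Fin n → ℝ) → ℝ)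
    (xbar pbar : Fin n → ℝ) (lbar ybar : ℝ)
    (hC2 : ∀ᶠ z in nhds xbar, ContDiffAt ℝ 2 f z)
    (hcrit : ∀ i, pbar i + lbar * pderiv1 n f i xbar = 0)
    (hout : f xbar = ybar)
    (V : Set ((Fin n → ℝ) × ℝ)) (W : Set (ℝ × (Fin n → ℝ)))
    (φ : (Fin n → ℝ) × ℝ → ℝ × (Fin n → ℝ))
    (hV : IsOpen V)
    (hVmem : (pbar, ybar) ∈ V) (hWmem : (lbar, xbar) ∈ W)
    (hφ : ContDiffOn ℝ 1 φ V) (hmaps : Set.MapsTo φ V W)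
    (huniq : ∀ p y, (p, y) ∈ V → ∀ l x, (l, x) ∈ W →
      (((∀ i, p i + l * pderiv1 n f i x = 0) ∧ f x = y) ↔ (l, x) = φ (p, y)))
    (C : (Fin n → ℝ) × ℝ → ℝ)
    (hC : ∀ z, C z = ∑ i, z.1 i * (φ z).2 i) :
    (∀ i, fderiv ℝ C (pbar, ybar) (Pi.single i 1, 0) = xbar i) ∧
      fderiv ℝ C (pbar, ybar) (0, 1) = -lbar := by
  have hVnhds : V ∈ 𝓝 (pbar, ybar) := hV.mem_nhds hVmem
  have hφbar : φ (pbar, ybar) = (lbar, xbar) :=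
    ((huniq pbar ybar hVmem lbar xbar hWmem).mp ⟨hcrit, hout⟩).symm
  have hconstr : ∀ z ∈ V, f (φ z).2 = z.2 := fun z hz =>
    ((huniq z.1 z.2 hz _ _ (hmaps hz)).mpr rfl).2
  have hx : HasFDerivAt (fun z => (φ z).2) _ (pbar, ybar) :=
    ((hφ.contDiffAt hVnhds).differentiableAt one_ne_zero).hasFDerivAt.snd
  have hf : HasFDerivAt f (fderiv ℝ f xbar) (φ (pbar, ybar)).2 := by
    rw [hφbar]
    exact (hC2.self_of_nhds.differentiableAt two_ne_zero).hasFDerivAt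
  have hDf : (fderiv ℝ f xbar).comp _ = ContinuousLinearMap.snd ℝ (Fin n → ℝ) ℝ :=
    hx.comp_eq_of_eventuallyEq hf hasFDerivAt_snd (eventually_of_mem hVnhds hconstr)
  have hDC := fderiv_cost_apply_of_lagrange hx hcrit hDf
  rw [show C = cost fun z => (φ z).2 from funext hC]
  refine ⟨fun i => ?_, ?_⟩ <;> simp [hDC, hφbar, Pi.single_apply]

/-- **envelope theorem / Shephard's lemma for the cost function.**
With `C(p,y) = Σᵢ pᵢ xᵢ(p,y)`, one has `∂C/∂pᵢ(p̄,ȳ) = x̄ᵢ` and `∂C/∂y(p̄,ȳ) = −λ̄`. -/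
theorem cost_function_first_derivatives (n : ℕ) (f : (Fin n → ℝ) → ℝ)
    (xbar pbar : Fin n → ℝ) (lbar ybar : ℝ)
    (hxpos : ∀ i, 0 < xbar i) (hppos : ∀ i, 0 < pbar i)
    (hC2 : ∀ᶠ z in nhds xbar, ContDiffAt ℝ 2 f z)
    (hcrit : ∀ i, pbar i + lbar * pderiv1 n f i xbar = 0)
    (hout : f xbar = ybar)
    (hF : (borderedHessian n f xbar).det ≠ 0)
    (V : Set ((Fin n → ℝ) × ℝ)) (W : Set (ℝ × (Fin n → ℝ)))
    (φ : (Fin n → ℝ) × ℝ → ℝ × (Fin n → ℝ))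
    (hV : IsOpen V) (hW : IsOpen W)
    (hVmem : (pbar, ybar) ∈ V) (hWmem : (lbar, xbar) ∈ W)
    (hφ : ContDiffOn ℝ 1 φ V) (hmaps : Set.MapsTo φ V W)
    (huniq : ∀ p y, (p, y) ∈ V → ∀ l x, (l, x) ∈ W →
      (((∀ i, p i + l * pderiv1 n f i x = 0) ∧ f x = y) ↔ (l, x) = φ (p, y)))
    (C : (Fin n → ℝ) × ℝ → ℝ)
    (hC : ∀ z, C z = ∑ i, z.1 i * (φ z).2 i) :
    (∀ i, fderiv ℝ C (pbar, ybar) (Pi.single i 1, 0) = xbar i) ∧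
      fderiv ℝ C (pbar, ybar) (0, 1) = -lbar :=
  cost_function_first_derivatives_general n f xbar pbar lbar ybar hC2 hcrit hout V W φ hV hVmem
    hWmem hφ hmaps huniq C hC
end

section
/- Let f : ℝⁿ → ℝ be of class C² in a neighborhood of x̄ with all coordinates positive, suppose p̄ᵢ + λ̄·∂f/∂xᵢ(x̄) = 0 for all i with p̄ having all positive coordinates, f(x̄) = ȳ, and the determinant of the bordered Hessian of f at x̄ is nonzero. Let φ = (λ(·,·), x(·,·)) : V → W be a C¹ map on a neighborhood V of (p̄, ȳ) such that for (p,y) ∈ V, φ(p,y) is the unique point (λ, x) in W satisfying pᵢ + λ·fᵢ(x) = 0 for all i and f(x) = y, and define C(p, y) = Σᵢ pᵢ·xᵢ(p, y). Then C is of class C² in a neighborhood of (p̄, ȳ), and its second partial derivatives satisfy ∂²C/∂pᵢ∂p_j(p̄, ȳ) = ∂xᵢ/∂p_j(p̄, ȳ) for all i, j = 1,…,n. -/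
open Filter
open ContinuousLinearMap Topology

/-!
Shephard's lemma via the envelope theorem. Differentiating `C(p, y) = ∑ pᵢ xᵢ(p, y)` gives
`dC = x ⬝ dp + p ⬝ dx`. The Lagrange conditions `pᵢ = -λ fᵢ(x)` turn the second term into
`-λ (∇f(x) ⬝ dx)`, and differentiating the constraint `f(x(p, y)) = y` shows `∇f(x) ⬝ dx = dy`.
Hence `dC = x ⬝ dp - λ dy`, whose coefficients `(λ, x) = φ(p, y)` are `C¹`: so `C` is `C²`, and
`∂C/∂pᵢ = xᵢ` near `(p̄, ȳ)`, which differentiates to `∂²C/∂pᵢ∂pⱼ = ∂xᵢ/∂pⱼ`.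
-/

section Envelope

variable {ι : Type*} [Fintype ι]

noncomputable def envelopeDeriv (q : ℝ × (ι → ℝ)) : ((ι → ℝ) × ℝ) →L[ℝ] ℝ :=
  ∑ i, q.2 i • (proj i).comp (fst ℝ (ι → ℝ) ℝ) - q.1 • snd ℝ (ι → ℝ) ℝ

@[simp]
lemma envelopeDeriv_apply (q : ℝ × (ι → ℝ)) (v : (ι → ℝ) × ℝ) :
    envelopeDeriv q v = ∑ i, q.2 i * v.1 i - q.1 * v.2 := by
  simp [envelopeDeriv]

lemma envelopeDeriv_apply_single [DecidableEq ι] (q : ℝ × (ι → ℝ)) (i : ι) :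
    envelopeDeriv q (Pi.single i 1, 0) = q.2 i := by
  simp [Pi.single_apply]

lemma contDiff_envelopeDeriv {k : WithTop ℕ∞} : ContDiff ℝ k (envelopeDeriv (ι := ι)) := by
  unfold envelopeDeriv
  fun_prop

lemma ContinuousLinearMap.apply_eq_sum_mul_apply_single [DecidableEq ι]
    (g : (ι → ℝ) →L[ℝ] ℝ) (w : ι → ℝ) : g w = ∑ i, w i * g (Pi.single i 1) := by
  conv_lhs => rw [pi_eq_sum_univ' w]
  simp [map_sum]

lemma hasFDerivAt_sum_mul_of_lagrange [DecidableEq ι] {f : (ι → ℝ) → ℝ}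
    {x : (ι → ℝ) × ℝ → ι → ℝ} {l : ℝ} {z : (ι → ℝ) × ℝ}
    (hx : DifferentiableAt ℝ x z) (hf : DifferentiableAt ℝ f (x z))
    (hconstraint : (fun w => f (x w)) =ᶠ[𝓝 z] Prod.snd)
    (hlagrange : ∀ i, z.1 i + l * fderiv ℝ f (x z) (Pi.single i 1) = 0) :
    HasFDerivAt (fun w => ∑ i, w.1 i * x w i) (envelopeDeriv (l, x z)) z := by
  have hchain : (fderiv ℝ f (x z)).comp (fderiv ℝ x z) = snd ℝ (ι → ℝ) ℝ :=
    ((hf.hasFDerivAt.comp z hx.hasFDerivAt).congr_of_eventuallyEq hconstraint.symm).unique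
      hasFDerivAt_snd
  have hterm (i : ι) : HasFDerivAt (fun w => w.1 i * x w i)
      (z.1 i • (proj i).comp (fderiv ℝ x z) + x z i • (proj i).comp (fst ℝ (ι → ℝ) ℝ)) z :=
    (hasFDerivAt_pi'.1 hasFDerivAt_fst i).mul (hasFDerivAt_pi'.1 hx.hasFDerivAt i)
  refine (HasFDerivAt.fun_sum fun i _ => hterm i).congr_fderiv (ext fun v => ?_)
  have hindirect : ∑ i, z.1 i * fderiv ℝ x z v i = -(l * v.2) :=
    calc ∑ i, z.1 i * fderiv ℝ x z v i
        = -(l * ∑ i, fderiv ℝ x z v i * fderiv ℝ f (x z) (Pi.single i 1)) := by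
          rw [Finset.mul_sum, ← Finset.sum_neg_distrib]
          refine Finset.sum_congr rfl fun i _ => ?_
          rw [eq_neg_of_add_eq_zero_left (hlagrange i)]
          ring
      _ = -(l * v.2) := by
          rw [← (fderiv ℝ f (x z)).apply_eq_sum_mul_apply_single, ← comp_apply, hchain,
            coe_snd']
  simp only [Finset.sum_add_distrib, add_apply, sum_apply, smul_apply, comp_apply, proj_apply,
    smul_eq_mul, hindirect, coe_fst', envelopeDeriv_apply]
  ring

lemma eventually_hasFDerivAt_sum_mul_of_lagrange [DecidableEq ι] {f : (ι → ℝ) → ℝ}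
    {φ : (ι → ℝ) × ℝ → ℝ × (ι → ℝ)} {V : Set ((ι → ℝ) × ℝ)} {z₀ : (ι → ℝ) × ℝ}
    (hV : IsOpen V) (hz₀ : z₀ ∈ V) (hφ : ContDiffOn ℝ 1 φ V)
    (hf : ∀ᶠ x in 𝓝 (φ z₀).2, DifferentiableAt ℝ f x)
    (hlagrange : ∀ z ∈ V,
      (∀ i, z.1 i + (φ z).1 * fderiv ℝ f (φ z).2 (Pi.single i 1) = 0) ∧ f (φ z).2 = z.2) :
    ∀ᶠ z in 𝓝 z₀, HasFDerivAt (fun w => ∑ i, w.1 i * (φ w).2 i) (envelopeDeriv (φ z)) z := by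
  have hx : ContinuousAt (fun z => (φ z).2) z₀ :=
    continuous_snd.continuousAt.comp (hφ.continuousOn.continuousAt (hV.mem_nhds hz₀))
  filter_upwards [eventually_eventually_nhds.2 ((hV.eventually_mem hz₀).and (hx.eventually hf))]
    with z hz
  obtain ⟨hzV, hfz⟩ := hz.self_of_nhds
  exact hasFDerivAt_sum_mul_of_lagrange
    ((hφ.contDiffAt (hV.mem_nhds hzV)).differentiableAt one_ne_zero).snd hfz
    (hz.mono fun w hw => (hlagrange w hw.1).2) (hlagrange z hzV).1

end Envelope

theorem cost_function_C2_and_second_derivatives_general (n : ℕ) (f : (Fin n → ℝ) → ℝ)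
    (xbar pbar : Fin n → ℝ) (lbar ybar : ℝ)
    (hC2 : ∀ᶠ z in nhds xbar, ContDiffAt ℝ 2 f z)
    (hcrit : ∀ i, pbar i + lbar * pderiv1 n f i xbar = 0)
    (hout : f xbar = ybar)
    (V : Set ((Fin n → ℝ) × ℝ)) (W : Set (ℝ × (Fin n → ℝ)))
    (φ : (Fin n → ℝ) × ℝ → ℝ × (Fin n → ℝ))
    (hV : IsOpen V)
    (hVmem : (pbar, ybar) ∈ V) (hWmem : (lbar, xbar) ∈ W)
    (hφ : ContDiffOn ℝ 1 φ V) (hmaps : Set.MapsTo φ V W)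
    (huniq : ∀ p y, (p, y) ∈ V → ∀ l x, (l, x) ∈ W →
      (((∀ i, p i + l * pderiv1 n f i x = 0) ∧ f x = y) ↔ (l, x) = φ (p, y)))
    (C : (Fin n → ℝ) × ℝ → ℝ)
    (hC : ∀ z, C z = ∑ i, z.1 i * (φ z).2 i) :
    (∀ᶠ z in nhds (pbar, ybar), ContDiffAt ℝ 2 C z) ∧
      ∀ i j : Fin n,
        fderiv ℝ (fun z => fderiv ℝ C z (Pi.single i 1, 0)) (pbar, ybar)
            (Pi.single j 1, 0) =
          fderiv ℝ (fun z => (φ z).2 i) (pbar, ybar) (Pi.single j 1, 0) := by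
  have hφbar : φ (pbar, ybar) = (lbar, xbar) :=
    ((huniq pbar ybar hVmem lbar xbar hWmem).1 ⟨hcrit, hout⟩).symm
  have hf : ∀ᶠ x in 𝓝 (φ (pbar, ybar)).2, DifferentiableAt ℝ f x := by
    rw [hφbar]
    exact hC2.mono fun x hx => hx.differentiableAt two_ne_zero
  have hderiv : ∀ᶠ z in 𝓝 (pbar, ybar), HasFDerivAt C (envelopeDeriv (φ z)) z := by
    rw [funext hC]
    exact eventually_hasFDerivAt_sum_mul_of_lagrange hV hVmem hφ hf
      fun z hz => (huniq z.1 z.2 hz _ _ (hmaps hz)).2 rfl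
  refine ⟨?_, fun i j => ?_⟩
  · filter_upwards [eventually_eventually_nhds.2 hderiv, hV.eventually_mem hVmem] with z hz hzV
    exact contDiffAt_succ_iff_hasFDerivAt (n := 1) |>.2 ⟨_, ⟨_, hz, fun _ h => h⟩,
      (contDiff_envelopeDeriv (ι := Fin n)).contDiffAt.comp z (hφ.contDiffAt (hV.mem_nhds hzV))⟩
  · have hShephard : (fun z => fderiv ℝ C z (Pi.single i 1, 0)) =ᶠ[𝓝 (pbar, ybar)]
        fun z => (φ z).2 i := by
      filter_upwards [hderiv] with z hz
      rw [hz.fderiv, envelopeDeriv_apply_single]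
    rw [hShephard.fderiv_eq]

/-- **the cost function is C² and `C_{ij} = ∂xᵢ/∂p_j`.** -/
theorem cost_function_C2_and_second_derivatives (n : ℕ) (f : (Fin n → ℝ) → ℝ)
    (xbar pbar : Fin n → ℝ) (lbar ybar : ℝ)
    (hxpos : ∀ i, 0 < xbar i) (hppos : ∀ i, 0 < pbar i)
    (hC2 : ∀ᶠ z in nhds xbar, ContDiffAt ℝ 2 f z)
    (hcrit : ∀ i, pbar i + lbar * pderiv1 n f i xbar = 0)
    (hout : f xbar = ybar)
    (hF : (borderedHessian n f xbar).det ≠ 0)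
    (V : Set ((Fin n → ℝ) × ℝ)) (W : Set (ℝ × (Fin n → ℝ)))
    (φ : (Fin n → ℝ) × ℝ → ℝ × (Fin n → ℝ))
    (hV : IsOpen V) (hW : IsOpen W)
    (hVmem : (pbar, ybar) ∈ V) (hWmem : (lbar, xbar) ∈ W)
    (hφ : ContDiffOn ℝ 1 φ V) (hmaps : Set.MapsTo φ V W)
    (huniq : ∀ p y, (p, y) ∈ V → ∀ l x, (l, x) ∈ W →
      (((∀ i, p i + l * pderiv1 n f i x = 0) ∧ f x = y) ↔ (l, x) = φ (p, y)))
    (C : (Fin n → ℝ) × ℝ → ℝ)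
    (hC : ∀ z, C z = ∑ i, z.1 i * (φ z).2 i) :
    (∀ᶠ z in nhds (pbar, ybar), ContDiffAt ℝ 2 C z) ∧
      ∀ i j : Fin n,
        fderiv ℝ (fun z => fderiv ℝ C z (Pi.single i 1, 0)) (pbar, ybar)
            (Pi.single j 1, 0) =
          fderiv ℝ (fun z => (φ z).2 i) (pbar, ybar) (Pi.single j 1, 0) :=
  cost_function_C2_and_second_derivatives_general n f xbar pbar lbar ybar hC2 hcrit hout V W φ hV
    hVmem hWmem hφ hmaps huniq C hC
end

section
/- Let f : ℝ²₊₊ → ℝ be a C² function that is homogeneous of degree 1 (f(t·x) = t·f(x) for all t > 0 and x with positive coordinates). Then at every point x with positive coordinates: (i) x₁f₁₁(x) + x₂f₁₂(x) = 0 and x₁f₂₁(x) + x₂f₂₂(x) = 0; and (ii) if f₁₂(x) ≠ 0 and f(x) ≠ 0, the Hicks elasticity of substitution satisfies σ^H(x) = ((x₁f₁ + x₂f₂)/(x₁x₂)) · f₁f₂/(−f₁₁f₂² + 2f₁₂f₁f₂ − f₂₂f₁²) = f₁(x)f₂(x)/(f(x)·f₁₂(x)). -/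
open Filter

/-! Differentiating `f (t • x) = t * f x` at `t = 1` gives Euler's identity `x₁ f₁ + x₂ f₂ = f`;
differentiating it in `x` shows that the gradient is homogeneous of degree `0`, so Euler's identity
for the partials gives `x₁ f₁ⱼ + x₂ f₂ⱼ = 0`, which with the symmetry of second derivatives is (i).
Eliminating `f₁₁` and `f₂₂` by (i), the denominator of `σ^H` becomes
`f₁₂ (x₁ f₁ + x₂ f₂)² / (x₁ x₂)`, and Euler's identity turns `σ^H` into `f₁ f₂ / (f f₁₂)`. -/

open Topology

section Homogeneous

variable {𝕜 E F : Type*} [NontriviallyNormedField 𝕜] [NormedAddCommGroup E] [NormedSpace 𝕜 E]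
  [NormedAddCommGroup F] [NormedSpace 𝕜 F]

theorem fderiv_smul_eq_of_eventually_homogeneous {f : E → F} {x : E} {t : 𝕜} (ht : t ≠ 0)
    (hhom : ∀ᶠ y in 𝓝 x, f (t • y) = t • f y) : fderiv 𝕜 f (t • x) = fderiv 𝕜 f x := by
  have h : fderiv 𝕜 (fun y => f (t • y)) x = fderiv 𝕜 (t • f) x :=
    EventuallyEq.fderiv_eq hhom
  rw [fderiv_comp_smul, fderiv_const_smul_field] at h
  exact smul_right_injective _ ht h

theorem fderiv_apply_self_of_eventually_homogeneous {g : E → F} {x : E} (k : ℕ)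
    (hg : DifferentiableAt 𝕜 g x)
    (hhom : ∀ᶠ t in 𝓝 (1 : 𝕜), g (t • x) = t ^ k • g x) :
    fderiv 𝕜 g x x = (k : 𝕜) • g x := by
  have hray : HasDerivAt (fun t : 𝕜 => g (t • x)) (fderiv 𝕜 g x x) 1 := by
    have hg' : HasFDerivAt g (fderiv 𝕜 g x) ((1 : 𝕜) • x) := by
      rw [one_smul]; exact hg.hasFDerivAt
    simpa [Function.comp_def] using
      hg'.comp_hasDerivAt (1 : 𝕜) ((hasDerivAt_id (1 : 𝕜)).smul_const x)
  have hpow : HasDerivAt (fun t : 𝕜 => t ^ k • g x) ((k : 𝕜) • g x) 1 := by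
    simpa using (hasDerivAt_pow k (1 : 𝕜)).smul_const (g x)
  exact hray.unique (hpow.congr_of_eventuallyEq hhom)

end Homogeneous

theorem fderiv_apply_eq_sum_pderiv1 {n : ℕ} (g : (Fin n → ℝ) → ℝ) (x y : Fin n → ℝ) :
    fderiv ℝ g x y = ∑ i, y i * pderiv1 n g i x := by
  conv_lhs => rw [← Finset.univ_sum_single y]
  rw [map_sum]
  refine Finset.sum_congr rfl fun i _ => ?_
  rw [pderiv1, ← smul_eq_mul, ← map_smul, ← Pi.single_smul', smul_eq_mul, mul_one]

theorem pderiv2_eq_fderiv_fderiv {n : ℕ} {f : (Fin n → ℝ) → ℝ} {x : Fin n → ℝ}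
    (hf : DifferentiableAt ℝ (fderiv ℝ f) x) (i j : Fin n) :
    pderiv2 n f i j x = fderiv ℝ (fderiv ℝ f) x (Pi.single i 1) (Pi.single j 1) := by
  have h : HasFDerivAt (pderiv1 n f j)
      ((ContinuousLinearMap.apply ℝ ℝ (Pi.single j 1 : Fin n → ℝ)).comp
        (fderiv ℝ (fderiv ℝ f) x)) x :=
    ((ContinuousLinearMap.apply ℝ ℝ (Pi.single j 1 : Fin n → ℝ)).hasFDerivAt.comp x
      hf.hasFDerivAt :)
  rw [pderiv2, pderiv1, h.fderiv]
  rfl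

namespace ContDiffAt

variable {n : ℕ} {f : (Fin n → ℝ) → ℝ} {x : Fin n → ℝ}

theorem differentiableAt_fderiv (hf : ContDiffAt ℝ 2 f x) : DifferentiableAt ℝ (fderiv ℝ f) x :=
  (hf.fderiv_right one_add_one_eq_two.le).differentiableAt one_ne_zero

theorem differentiableAt_pderiv1_s12 (hf : ContDiffAt ℝ 2 f x) (i : Fin n) :
    DifferentiableAt ℝ (pderiv1 n f i) x :=
  ((ContinuousLinearMap.apply ℝ ℝ (Pi.single i 1 : Fin n → ℝ)).differentiableAt.comp x
    hf.differentiableAt_fderiv :)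

theorem pderiv2_comm (hf : ContDiffAt ℝ 2 f x) (i j : Fin n) :
    pderiv2 n f i j x = pderiv2 n f j i x := by
  rw [pderiv2_eq_fderiv_fderiv hf.differentiableAt_fderiv,
    pderiv2_eq_fderiv_fderiv hf.differentiableAt_fderiv]
  exact hf.isSymmSndFDerivAt (by simp) _ _

end ContDiffAt

theorem hicks_elasticity_eq_of_euler {x₁ x₂ f₁ f₂ f₁₁ f₁₂ f₂₂ : ℝ} (hx₁ : x₁ ≠ 0) (hx₂ : x₂ ≠ 0)
    (h₁ : x₁ * f₁₁ + x₂ * f₁₂ = 0) (h₂ : x₁ * f₁₂ + x₂ * f₂₂ = 0) :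
    (x₁ * f₁ + x₂ * f₂) / (x₁ * x₂) *
        (f₁ * f₂ / (-f₁₁ * f₂ ^ 2 + 2 * f₁₂ * f₁ * f₂ - f₂₂ * f₁ ^ 2)) =
      f₁ * f₂ / ((x₁ * f₁ + x₂ * f₂) * f₁₂) := by
  set y := x₁ * f₁ + x₂ * f₂
  have hD : -f₁₁ * f₂ ^ 2 + 2 * f₁₂ * f₁ * f₂ - f₂₂ * f₁ ^ 2 = f₁₂ * y ^ 2 / (x₁ * x₂) := by
    rw [eq_div_iff (mul_ne_zero hx₁ hx₂)]
    linear_combination (-x₂ * f₂ ^ 2) * h₁ + (-x₁ * f₁ ^ 2) * h₂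
  rw [hD]
  rcases eq_or_ne f₁₂ 0 with rfl | hf₁₂
  · simp
  rcases eq_or_ne y 0 with hy | hy
  · simp [hy]
  field_simp

/-- **Hicks ES of a linearly homogeneous function of two variables.**
For a `C²` function on the positive orthant homogeneous of degree 1:
(i) `x₁ f₁₁ + x₂ f₁₂ = 0` and `x₁ f₂₁ + x₂ f₂₂ = 0`;
(ii) if `f₁₂(x) ≠ 0` and `f(x) ≠ 0`, the Hicks elasticity of substitution equals
`f₁ f₂ / (f f₁₂)`. -/
theorem HES_linearly_homogeneous (f : (Fin 2 → ℝ) → ℝ)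
    (hC2 : ∀ x : Fin 2 → ℝ, (∀ i, 0 < x i) → ContDiffAt ℝ 2 f x)
    (hhom : ∀ t : ℝ, 0 < t → ∀ x : Fin 2 → ℝ, (∀ i, 0 < x i) → f (t • x) = t * f x)
    (x : Fin 2 → ℝ) (hx : ∀ i, 0 < x i) :
    (x 0 * pderiv2 2 f 0 0 x + x 1 * pderiv2 2 f 0 1 x = 0 ∧
      x 0 * pderiv2 2 f 1 0 x + x 1 * pderiv2 2 f 1 1 x = 0) ∧
    (pderiv2 2 f 0 1 x ≠ 0 → f x ≠ 0 →
      ((x 0 * pderiv1 2 f 0 x + x 1 * pderiv1 2 f 1 x) / (x 0 * x 1)) *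
          (pderiv1 2 f 0 x * pderiv1 2 f 1 x /
            (-(pderiv2 2 f 0 0 x) * (pderiv1 2 f 1 x) ^ 2 +
              2 * pderiv2 2 f 0 1 x * pderiv1 2 f 0 x * pderiv1 2 f 1 x -
              pderiv2 2 f 1 1 x * (pderiv1 2 f 0 x) ^ 2)) =
        pderiv1 2 f 0 x * pderiv1 2 f 1 x / (f x * pderiv2 2 f 0 1 x)) := by
  have hC2x := hC2 x hx
  have hpos : ∀ᶠ t in 𝓝 (1 : ℝ), 0 < t := lt_mem_nhds one_pos
  have hnear : ∀ᶠ y in 𝓝 x, ∀ i, 0 < y i :=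
    eventually_all.2 fun i => (continuous_apply i).continuousAt.eventually (lt_mem_nhds (hx i))
  have hEuler : x 0 * pderiv1 2 f 0 x + x 1 * pderiv1 2 f 1 x = f x := by
    have h := fderiv_apply_self_of_eventually_homogeneous 1 (hC2x.differentiableAt two_ne_zero)
      (hpos.mono fun t ht => by simpa using hhom t ht x hx)
    simpa [fderiv_apply_eq_sum_pderiv1, Fin.sum_univ_two] using h
  have hgrad : ∀ᶠ t in 𝓝 (1 : ℝ), fderiv ℝ f (t • x) = fderiv ℝ f x :=
    hpos.mono fun t ht => fderiv_smul_eq_of_eventually_homogeneous ht.ne'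
      (hnear.mono fun y hy => hhom t ht y hy)
  have hEuler₀ : ∀ j, x 0 * pderiv2 2 f 0 j x + x 1 * pderiv2 2 f 1 j x = 0 := fun j => by
    have h := fderiv_apply_self_of_eventually_homogeneous 0 (hC2x.differentiableAt_pderiv1_s12 j)
      (hgrad.mono fun t ht => by simp [pderiv1, ht])
    simpa [fderiv_apply_eq_sum_pderiv1, Fin.sum_univ_two, pderiv2] using h
  have hsymm := hC2x.pderiv2_comm 0 1
  have h₁ : x 0 * pderiv2 2 f 0 0 x + x 1 * pderiv2 2 f 0 1 x = 0 := hsymm ▸ hEuler₀ 0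
  have h₂ : x 0 * pderiv2 2 f 1 0 x + x 1 * pderiv2 2 f 1 1 x = 0 := hsymm ▸ hEuler₀ 1
  refine ⟨⟨h₁, h₂⟩, fun _ _ => ?_⟩
  rw [← hEuler]
  exact hicks_elasticity_eq_of_euler (hx 0).ne' (hx 1).ne' h₁ (hsymm ▸ h₂)
end

section
/- Define C : ℝ³₊₊ × (0,∞) → ℝ by C(p₁, p₂, p₃, y) = y·(p₁ + 2·√(p₂·p₃)), and for i ≠ j define σ^M_{ij}(p, y) = pᵢ·(C_{ij}/C_j − C_{ii}/C_i) where subscripts denote partial derivatives with respect to the price variables. Then for every (p, y) ∈ ℝ³₊₊ × (0,∞): σ^M_{12}(p, y) = 0 and σ^M_{21}(p, y) = 1/2. In particular, the Morishima elasticity of substitution is not symmetric. -/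
open Filter

/-!
The cost is linear in `p₁` and depends on `(p₂, p₃)` only through `√(p₂ p₃)`. Hence `C₁ = y` is
locally constant, so `C₁₁ = C₂₁ = 0`, and `C₂ = y p₃ / √(p₂ p₃)` does not involve `p₁`, so
`C₁₂ = 0`. Finally `C₂` is homogeneous of degree `-1/2` in `p₂`, so `C₂₂ / C₂ = -1 / (2 p₂)`,
which gives `σ^M₂₁ = 1/2`. (Lean indexes the prices from `0`.)
-/

open Topology ContinuousLinearMap

theorem pderiv1_eq_of_hasFDerivAt {n : ℕ} {f : (Fin n → ℝ) → ℝ} {f' : (Fin n → ℝ) →L[ℝ] ℝ}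
    {x : Fin n → ℝ} (hf : HasFDerivAt f f' x) (i : Fin n) :
    pderiv1 n f i x = f' (Pi.single i 1) := by
  rw [pderiv1, hf.fderiv]

theorem hasFDerivAt_sqrt_mul_apply {ι : Type*} [Fintype ι] (i j : ι) {q : ι → ℝ}
    (hq : q i * q j ≠ 0) :
    HasFDerivAt (fun v : ι → ℝ => √(v i * v j))
      ((1 / (2 * √(q i * q j))) • (q i • (proj j : (ι → ℝ) →L[ℝ] ℝ) + q j • proj i)) q :=
  ((hasFDerivAt_apply i q).mul (hasFDerivAt_apply j q)).sqrt hq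

namespace BlackorbyRussell

noncomputable def cost (y : ℝ) (q : Fin 3 → ℝ) : ℝ :=
  y * (q 0 + 2 * √(q 1 * q 2))

variable (y : ℝ) {q : Fin 3 → ℝ}

theorem hasFDerivAt_cost (hq : q 1 * q 2 ≠ 0) :
    HasFDerivAt (cost y)
      (y • ((proj 0 : (Fin 3 → ℝ) →L[ℝ] ℝ) + (√(q 1 * q 2))⁻¹ • (q 2 • proj 1 + q 1 • proj 2)))
      q := by
  refine (((hasFDerivAt_apply 0 q).add
    ((hasFDerivAt_sqrt_mul_apply 1 2 hq).const_mul 2)).const_mul y).congr_fderiv ?_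
  ext v
  simp only [smul_add, add_apply, smul_apply, proj_apply, smul_eq_mul]
  field_simp
  ring

theorem pderiv1_cost_zero (hq : q 1 * q 2 ≠ 0) : pderiv1 3 (cost y) 0 q = y := by
  simp [pderiv1_eq_of_hasFDerivAt (hasFDerivAt_cost y hq)]

theorem pderiv1_cost_one (hq : q 1 * q 2 ≠ 0) :
    pderiv1 3 (cost y) 1 q = y * q 2 / √(q 1 * q 2) := by
  simp [pderiv1_eq_of_hasFDerivAt (hasFDerivAt_cost y hq), div_eq_inv_mul, mul_left_comm]

theorem eventually_mul_apply_ne_zero (hq : q 1 * q 2 ≠ 0) :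
    ∀ᶠ v in 𝓝 q, v 1 * v 2 ≠ 0 :=
  ((continuous_apply 1).mul (continuous_apply 2)).continuousAt.eventually_ne hq

theorem pderiv2_cost_zero (hq : q 1 * q 2 ≠ 0) (i : Fin 3) : pderiv2 3 (cost y) i 0 q = 0 := by
  have hderiv : HasFDerivAt (pderiv1 3 (cost y) 0) (0 : (Fin 3 → ℝ) →L[ℝ] ℝ) q :=
    (hasFDerivAt_const (𝕜 := ℝ) y q).congr_of_eventuallyEq <|
      (eventually_mul_apply_ne_zero hq).mono fun _ hv => pderiv1_cost_zero y hv
  rw [pderiv2, pderiv1_eq_of_hasFDerivAt hderiv, zero_apply]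

theorem hasFDerivAt_pderiv1_cost_one (hq : 0 < q 1 * q 2) :
    HasFDerivAt (pderiv1 3 (cost y) 1)
      ((y / (2 * √(q 1 * q 2))) • ((proj 2 : (Fin 3 → ℝ) →L[ℝ] ℝ) - (q 2 / q 1) • proj 1)) q := by
  have hs : √(q 1 * q 2) ≠ 0 := (Real.sqrt_pos.mpr hq).ne'
  have hformula : HasFDerivAt (fun v : Fin 3 → ℝ => y * v 2 * (√(v 1 * v 2))⁻¹)
      ((y / (2 * √(q 1 * q 2))) • ((proj 2 : (Fin 3 → ℝ) →L[ℝ] ℝ) - (q 2 / q 1) • proj 1)) q := by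
    refine (((hasFDerivAt_apply 2 q).const_mul y).mul ((hasDerivAt_inv hs).comp_hasFDerivAt q
      (hasFDerivAt_sqrt_mul_apply 1 2 hq.ne'))).congr_fderiv ?_
    have hq1 : q 1 ≠ 0 := left_ne_zero_of_mul hq.ne'
    have hsq : √(q 1 * q 2) ^ 2 = q 1 * q 2 := Real.sq_sqrt hq.le
    ext v
    simp only [smul_add, neg_smul, smul_neg, Function.comp_apply, add_apply, neg_apply, smul_apply,
      sub_apply, proj_apply, smul_eq_mul]
    generalize √(q 1 * q 2) = s at hs hsq ⊢
    field_simp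
    linear_combination y * (q 1 * v 2 + q 2 * v 1) * hsq
  refine hformula.congr_of_eventuallyEq ?_
  filter_upwards [eventually_mul_apply_ne_zero hq.ne'] with v hv
  rw [pderiv1_cost_one y hv, div_eq_mul_inv]

theorem pderiv2_cost_zero_one (hq : 0 < q 1 * q 2) : pderiv2 3 (cost y) 0 1 q = 0 := by
  simp [pderiv2, pderiv1_eq_of_hasFDerivAt (hasFDerivAt_pderiv1_cost_one y hq)]

theorem pderiv2_cost_one_one (hq : 0 < q 1 * q 2) :
    pderiv2 3 (cost y) 1 1 q = -pderiv1 3 (cost y) 1 q / (2 * q 1) := by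
  have hq1 : q 1 ≠ 0 := left_ne_zero_of_mul hq.ne'
  rw [pderiv2, pderiv1_eq_of_hasFDerivAt (hasFDerivAt_pderiv1_cost_one y hq),
    pderiv1_cost_one y hq.ne']
  simp only [smul_apply, sub_apply, proj_apply, Pi.single_eq_same, smul_eq_mul,
    Pi.single_eq_of_ne (by decide : (2 : Fin 3) ≠ 1)]
  field_simp
  ring

end BlackorbyRussell

open BlackorbyRussell in
/-- **Morishima elasticities for the Blackorby–Russell cost function.**
For `C(p,y) = y (p₁ + 2 √(p₂ p₃))`: `σ^M₁₂ = 0` and `σ^M₂₁ = 1/2` at every positive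
`(p, y)`; in particular the Morishima elasticity of substitution is not symmetric. -/
theorem morishima_blackorby_russell (p : Fin 3 → ℝ) (hp : ∀ i, 0 < p i)
    (y : ℝ) (hy : 0 < y)
    (C : (Fin 3 → ℝ) → ℝ)
    (hC : ∀ q, C q = y * (q 0 + 2 * Real.sqrt (q 1 * q 2))) :
    p 0 * (pderiv2 3 C 0 1 p / pderiv1 3 C 1 p -
        pderiv2 3 C 0 0 p / pderiv1 3 C 0 p) = 0 ∧
      p 1 * (pderiv2 3 C 1 0 p / pderiv1 3 C 0 p -
        pderiv2 3 C 1 1 p / pderiv1 3 C 1 p) = 1 / 2 := by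
  obtain rfl : C = cost y := funext hC
  have hq : 0 < p 1 * p 2 := mul_pos (hp 1) (hp 2)
  have hC₂ : pderiv1 3 (cost y) 1 p ≠ 0 := by
    rw [pderiv1_cost_one y hq.ne']
    exact div_ne_zero (mul_ne_zero hy.ne' (hp 2).ne') (Real.sqrt_pos.mpr hq).ne'
  rw [pderiv2_cost_zero_one y hq, pderiv2_cost_zero y hq.ne', pderiv2_cost_zero y hq.ne',
    pderiv2_cost_one_one y hq, pderiv1_cost_zero y hq.ne']
  constructor
  · simp
  · field_simp [hy.ne', (hp 1).ne']
    ring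
end

section
/- Define f : ℝ³₊₊ → ℝ by f(x₁, x₂, x₃) = min(x₁, √(x₂·x₃)). Then at every point x ∈ ℝ³₊₊ with x₁² ≠ x₂·x₃, f is of class C² in a neighborhood of x and the determinant of the 4×4 bordered Hessian of f at x equals 0. Consequently the Allen elasticity of substitution σ^A_{ij}(x) = ((x₁f₁ + x₂f₂ + x₃f₃)/(xᵢx_j))·(F_{ij}/F) is undefined at every point of ℝ³₊₊. -/
open Filter

/-!
Off the kink curve `x₁² = x₂ x₃` one of the two arguments of the minimum is strictly smaller,
so near `x` the function `f` coincides with `w ↦ w₁` or with `w ↦ √(w₂ w₃)`. Both are smooth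
there, and each ignores one of the coordinates (`x₂`, resp. `x₁`). The partial derivative in
that coordinate vanishes on a neighbourhood of `x`, so the corresponding column of the bordered
Hessian (gradient entry on top, mixed second derivatives below) is zero.
-/

open Topology

theorem fderiv_apply_eq_zero_of_forall_add_smul_eq {𝕜 E F : Type*} [NontriviallyNormedField 𝕜]
    [NormedAddCommGroup E] [NormedSpace 𝕜 E] [NormedAddCommGroup F] [NormedSpace 𝕜 F]
    {g : E → F} {v : E} (hg : ∀ w (t : 𝕜), g (w + t • v) = g w) (x : E) :
    fderiv 𝕜 g x v = 0 := by
  by_cases hd : DifferentiableAt 𝕜 g x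
  · simp [← hd.lineDeriv_eq_fderiv, lineDeriv, hg]
  · simp [fderiv_zero_of_not_differentiableAt hd]

theorem eventually_pderiv1_eq_zero_of_eventuallyEq {n : ℕ} {f g : (Fin n → ℝ) → ℝ}
    {x : Fin n → ℝ} {j : Fin n} (hfg : f =ᶠ[𝓝 x] g)
    (hg : ∀ w (t : ℝ), g (w + t • Pi.single j 1) = g w) :
    ∀ᶠ z in 𝓝 x, pderiv1 n f j z = 0 := by
  filter_upwards [hfg.eventuallyEq_nhds] with z hz
  rw [pderiv1, hz.fderiv_eq]
  exact fderiv_apply_eq_zero_of_forall_add_smul_eq hg z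

theorem borderedHessian_det_eq_zero_of_eventually_pderiv1_eq_zero {n : ℕ}
    {f : (Fin n → ℝ) → ℝ} {x : Fin n → ℝ} {j : Fin n}
    (h : ∀ᶠ z in 𝓝 x, pderiv1 n f j z = 0) :
    (borderedHessian n f x).det = 0 := by
  refine Matrix.det_eq_zero_of_column_eq_zero j.succ fun i => ?_
  cases i using Fin.cases with
  | zero => simpa [borderedHessian] using h.self_of_nhds
  | succ i =>
    have hzero : pderiv1 n f j =ᶠ[𝓝 x] fun _ => 0 := h
    simp [borderedHessian, pderiv2, pderiv1, hzero.fderiv_eq]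

theorem eventually_contDiffAt_and_borderedHessian_det_eq_zero_of_eventuallyEq {n : ℕ}
    {f g : (Fin n → ℝ) → ℝ} {x : Fin n → ℝ} (j : Fin n) (hfg : f =ᶠ[𝓝 x] g)
    (hg : ContDiffAt ℝ 2 g x) (hgj : ∀ w (t : ℝ), g (w + t • Pi.single j 1) = g w) :
    (∀ᶠ z in 𝓝 x, ContDiffAt ℝ 2 f z) ∧ (borderedHessian n f x).det = 0 :=
  ⟨(hg.congr_of_eventuallyEq hfg).eventually (by simp),
    borderedHessian_det_eq_zero_of_eventually_pderiv1_eq_zero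
      (eventually_pderiv1_eq_zero_of_eventuallyEq hfg hgj)⟩

section MinEventuallyEq

variable {X α : Type*} [TopologicalSpace X] [LinearOrder α] [TopologicalSpace α]
  [OrderClosedTopology α] {g h : X → α} {x : X}

theorem eventuallyEq_min_left_of_lt (hg : ContinuousAt g x) (hh : ContinuousAt h x)
    (hlt : g x < h x) : (fun w => min (g w) (h w)) =ᶠ[𝓝 x] g :=
  (hg.eventually_lt hh hlt).mono fun _ hw => min_eq_left hw.le

theorem eventuallyEq_min_right_of_lt (hg : ContinuousAt g x) (hh : ContinuousAt h x)
    (hlt : h x < g x) : (fun w => min (g w) (h w)) =ᶠ[𝓝 x] h :=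
  (hh.eventually_lt hg hlt).mono fun _ hw => min_eq_right hw.le

end MinEventuallyEq

/-- **the Blackorby–Russell production function has a singular bordered
Hessian off the kink curve.** For `f(x₁,x₂,x₃) = min(x₁, √(x₂ x₃))` and every positive
point with `x₁² ≠ x₂ x₃`, `f` is `C²` in a neighborhood of `x` and the determinant of the
`4 × 4` bordered Hessian of `f` at `x` vanishes; hence (together with Statement 15) the
Allen elasticity of substitution is undefined at every point of the positive orthant. -/
theorem blackorby_russell_singular_bordered_hessian (x : Fin 3 → ℝ)
    (hx : ∀ i, 0 < x i) (h : (x 0) ^ 2 ≠ x 1 * x 2) :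
    (∀ᶠ z in nhds x,
        ContDiffAt ℝ 2 (fun w : Fin 3 → ℝ => min (w 0) (Real.sqrt (w 1 * w 2))) z) ∧
      (borderedHessian 3 (fun w : Fin 3 → ℝ => min (w 0) (Real.sqrt (w 1 * w 2))) x).det
        = 0 := by
  have hprod : 0 < x 1 * x 2 := mul_pos (hx 1) (hx 2)
  have hfst : ContinuousAt (fun w : Fin 3 → ℝ => w 0) x := (continuous_apply 0).continuousAt
  have hsqrt : ContinuousAt (fun w : Fin 3 → ℝ => Real.sqrt (w 1 * w 2)) x := by fun_prop
  have hkink : x 0 ≠ Real.sqrt (x 1 * x 2) := fun he => h (by rw [he, Real.sq_sqrt hprod.le])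
  rcases hkink.lt_or_gt with hlt | hgt
  · exact eventually_contDiffAt_and_borderedHessian_det_eq_zero_of_eventuallyEq 1
      (eventuallyEq_min_left_of_lt hfst hsqrt hlt) (by fun_prop) fun w t => by simp
  · exact eventually_contDiffAt_and_borderedHessian_det_eq_zero_of_eventuallyEq 0
      (eventuallyEq_min_right_of_lt hfst hsqrt hgt)
      ((by fun_prop : ContDiffAt ℝ 2 (fun w : Fin 3 → ℝ => w 1 * w 2) x).sqrt hprod.ne')
      fun w t => by simp
end

section
/- Define f : ℝ³₊₊ → ℝ by f(x₁, x₂, x₃) = min(x₁, √(x₂·x₃)). For every p ∈ ℝ³₊₊ and every y > 0, the infimum of p₁x₁ + p₂x₂ + p₃x₃ over the set {x ∈ ℝ³₊₊ : f(x) = y} equals y·(p₁ + 2·√(p₂·p₃)), and this infimum is attained at the point x* = (y, y·√(p₃/p₂), y·√(p₂/p₃)). -/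
/-!
A feasible input bundle has `y ≤ x₁` and `y ≤ √(x₂ x₃)`, so by AM–GM
`p₂x₂ + p₃x₃ ≥ 2 √(p₂p₃) √(x₂x₃) ≥ 2 √(p₂p₃) y`, and `p₁x₁ ≥ p₁y`. The point `x*` balances the
two AM–GM terms (`p₂x₂ = p₃x₃ = y √(p₂p₃)`) and has `x₂x₃ = y²`, so it attains the bound.
-/

open Real

lemma mul_sqrt_div_self {a : ℝ} (ha : 0 ≤ a) (b : ℝ) : a * √(b / a) = √(a * b) := by
  rw [sqrt_div' b ha, mul_div_assoc', mul_div_right_comm, div_sqrt, ← sqrt_mul ha]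

lemma sqrt_div_mul_sqrt_div {a b : ℝ} (ha : 0 < a) (hb : 0 < b) : √(a / b) * √(b / a) = 1 := by
  rw [← sqrt_mul (by positivity), div_mul_div_comm, mul_comm a b, div_self (by positivity), sqrt_one]

lemma two_mul_sqrt_mul_le_add {a b : ℝ} (ha : 0 ≤ a) (hb : 0 ≤ b) : 2 * √(a * b) ≤ a + b := by
  simpa [← sqrt_mul ha, mul_assoc, sq_sqrt ha, sq_sqrt hb] using two_mul_le_add_sq (√a) (√b)

lemma two_mul_sqrt_mul_mul_le_add {a b u v y : ℝ} (ha : 0 ≤ a) (hb : 0 ≤ b) (hu : 0 ≤ u)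
    (hv : 0 ≤ v) (hy : y ≤ √(u * v)) : 2 * √(a * b) * y ≤ a * u + b * v :=
  calc 2 * √(a * b) * y ≤ 2 * √(a * b) * √(u * v) := by gcongr
    _ = 2 * √((a * u) * (b * v)) := by rw [mul_assoc, ← sqrt_mul (by positivity)]; ring_nf
    _ ≤ a * u + b * v := two_mul_sqrt_mul_le_add (by positivity) (by positivity)

lemma cost_ge_of_le_min {p₀ p₁ p₂ x₀ x₁ x₂ y : ℝ} (hp₀ : 0 ≤ p₀) (hp₁ : 0 ≤ p₁) (hp₂ : 0 ≤ p₂)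
    (hx₁ : 0 ≤ x₁) (hx₂ : 0 ≤ x₂) (hy : y ≤ min x₀ √(x₁ * x₂)) :
    y * (p₀ + 2 * √(p₁ * p₂)) ≤ p₀ * x₀ + p₁ * x₁ + p₂ * x₂ := by
  obtain ⟨hy₀, hy₁₂⟩ := le_min_iff.mp hy
  have := mul_le_mul_of_nonneg_left hy₀ hp₀
  have := two_mul_sqrt_mul_mul_le_add hp₁ hp₂ hx₁ hx₂ hy₁₂
  linarith

lemma cost_eq_of_balanced {p₁ p₂ : ℝ} (hp₁ : 0 ≤ p₁) (hp₂ : 0 ≤ p₂) (p₀ y : ℝ) :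
    p₀ * y + p₁ * (y * √(p₂ / p₁)) + p₂ * (y * √(p₁ / p₂)) = y * (p₀ + 2 * √(p₁ * p₂)) := by
  rw [mul_left_comm p₁, mul_left_comm p₂, mul_sqrt_div_self hp₁, mul_sqrt_div_self hp₂,
    mul_comm p₂ p₁]
  ring

/-- **the cost function of the Blackorby–Russell example.**
For `f(x₁,x₂,x₃) = min(x₁, √(x₂ x₃))`, positive prices `p` and output `y > 0`, the
infimum of `p₁x₁ + p₂x₂ + p₃x₃` over `{x ∈ ℝ³₊₊ : f(x) = y}` equals
`y (p₁ + 2 √(p₂ p₃))` and is attained at `x* = (y, y √(p₃/p₂), y √(p₂/p₃))`. -/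
theorem blackorby_russell_cost_function (p : Fin 3 → ℝ) (hp : ∀ i, 0 < p i)
    (y : ℝ) (hy : 0 < y) :
    IsLeast {v : ℝ | ∃ x : Fin 3 → ℝ, (∀ i, 0 < x i) ∧
        min (x 0) (Real.sqrt (x 1 * x 2)) = y ∧
        v = p 0 * x 0 + p 1 * x 1 + p 2 * x 2}
      (y * (p 0 + 2 * Real.sqrt (p 1 * p 2))) ∧
    (∀ i, 0 < (![y, y * Real.sqrt (p 2 / p 1), y * Real.sqrt (p 1 / p 2)] : Fin 3 → ℝ) i) ∧
    min (y : ℝ) (Real.sqrt ((y * Real.sqrt (p 2 / p 1)) * (y * Real.sqrt (p 1 / p 2)))) = y ∧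
    p 0 * y + p 1 * (y * Real.sqrt (p 2 / p 1)) + p 2 * (y * Real.sqrt (p 1 / p 2)) =
      y * (p 0 + 2 * Real.sqrt (p 1 * p 2)) := by
  have hp₀ := hp 0; have hp₁ := hp 1; have hp₂ := hp 2
  have hpos : ∀ i, 0 < (![y, y * √(p 2 / p 1), y * √(p 1 / p 2)] : Fin 3 → ℝ) i := by
    intro i; fin_cases i <;> dsimp <;> positivity
  have hmin : min y √((y * √(p 2 / p 1)) * (y * √(p 1 / p 2))) = y := by
    rw [mul_mul_mul_comm, sqrt_div_mul_sqrt_div hp₂ hp₁, mul_one, sqrt_mul_self hy.le, min_self]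
  have hcost := cost_eq_of_balanced hp₁.le hp₂.le (p 0) y
  refine ⟨⟨⟨_, hpos, hmin, hcost.symm⟩, ?_⟩, hpos, hmin, hcost⟩
  rintro v ⟨x, hx, hxy, rfl⟩
  exact cost_ge_of_le_min hp₀.le hp₁.le hp₂.le (hx 1).le (hx 2).le hxy.ge
end
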